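/- arXiv:2511.20370 — 3 statements merged into one kernel-verified Lean document; each statement's English description precedes it below -/
import Mathlib

section
/- Fix x⋆ ∈ ℝⁿ, set y⋆ := ∇f*(x⋆), V(x) := D_f(x, y⋆), and q(x, u) := φ*(∇f(x)) + φ(−u) + ⟨u, x⋆⟩. Let x : [0, ∞) → ℝⁿ be absolutely continuous with x(0) = x₀ and ẋ(t) = u(t) for a (locally integrable) control u. Then for every t ≥ 0, ∫₀^t q(x(s), u(s)) ds ≥ V(x₀) − V(x(t)). In particular, for any stabilizing control u (one for which ∇f(x(t)) → x⋆ as t → ∞, so that V(x(t)) → 0), the infinite-horizon cost satisfies J_∞(x₀, u) := ∫₀^∞ q(x(t), u(t)) dt ≥ V(x₀). -/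
open MeasureTheory Filter Topology Set
open scoped RealInnerProductSpace

noncomputable section

lemma aux_le_of_eps {a b : ℝ} (h : ∀ ε : ℝ, 0 < ε → a ≤ b + ε) : a ≤ b := by
  by_contra hc
  push_neg at hc
  have := h ((a - b) / 2) (by linarith)
  linarith

lemma aux_grad_ineq {E : Type*} [NormedAddCommGroup E] [InnerProductSpace ℝ E] [CompleteSpace E]
    {f : E → ℝ} (hconv : ConvexOn ℝ Set.univ f)
    {g : E} (z w : E) (hg : HasGradientAt f g z) :
    ⟪g, w - z⟫ ≤ f w - f z := by
  have hline : HasDerivAt (fun τ : ℝ => z + τ • (w - z)) (w - z) 0 := by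
    simpa using ((hasDerivAt_id (0:ℝ)).smul_const (w - z)).const_add z
  have hF : HasFDerivAt f (InnerProductSpace.toDual ℝ E g) (z + (0:ℝ) • (w - z)) := by
    simpa using (hasGradientAt_iff_hasFDerivAt.1 hg)
  have hcomp : HasDerivAt (fun τ : ℝ => f (z + τ • (w - z))) ⟪g, w - z⟫ 0 := by
    have h := hF.comp_hasDerivAt (0:ℝ) hline
    simp only [InnerProductSpace.toDual_apply_apply] at h
    exact h
  have hslope := hasDerivAt_iff_tendsto_slope.1 hcomp
  have hmono : 𝓝[>] (0:ℝ) ≤ 𝓝[≠] (0:ℝ) :=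
    nhdsWithin_mono _ (fun τ hτ => ne_of_gt hτ)
  refine le_of_tendsto (hslope.mono_left hmono) ?_
  filter_upwards [Ioc_mem_nhdsGT_of_mem (Set.mem_Ico.2 ⟨le_refl (0:ℝ), zero_lt_one⟩)] with τ hτ
  have hτ0 : (0:ℝ) < τ := hτ.1
  have hcv := hconv.2 (Set.mem_univ w) (Set.mem_univ z)
    (le_of_lt hτ0) (by linarith [hτ.2] : (0:ℝ) ≤ 1 - τ) (by ring : τ + (1 - τ) = 1)
  have hpt : τ • w + (1 - τ) • z = z + τ • (w - z) := by module
  rw [hpt] at hcv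
  have hs : slope (fun τ : ℝ => f (z + τ • (w - z))) 0 τ
      = (f (z + τ • (w - z)) - f z) / τ := by
    simp [slope_def_field]
  rw [hs, div_le_iff₀ hτ0]
  have : f (z + τ • (w - z)) ≤ τ * f w + (1 - τ) * f z := by
    simpa [smul_eq_mul] using hcv
  nlinarith

set_option maxHeartbeats 1000000 in
theorem stmt_15 (n : ℕ)
    (f : EuclideanSpace ℝ (Fin n) → ℝ) (f' : EuclideanSpace ℝ (Fin n) → EuclideanSpace ℝ (Fin n))
    (hf : ContDiff ℝ 2 f)
    (hf' : ∀ z, HasGradientAt f (f' z) z)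
    (hf_lb : ∀ α : ℝ, Bornology.IsBounded {z | f z ≤ α})
    (hf_sconv : StrictConvexOn ℝ Set.univ f)
    (hf_coer : Tendsto (fun z => f z / ‖z‖) (Filter.cocompact (EuclideanSpace ℝ (Fin n))) atTop)
    (fs' : EuclideanSpace ℝ (Fin n) → EuclideanSpace ℝ (Fin n))
    (hfs'_left : ∀ z, fs' (f' z) = z)
    (hfs'_right : ∀ y, f' (fs' y) = y)
    (φ : EuclideanSpace ℝ (Fin n) → EReal)
    (hφ_proper : ∃ z, φ z ≠ ⊤)
    (hφ_lsc : LowerSemicontinuous φ)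
    (hφ_nonneg : ∀ z, 0 ≤ φ z)
    (hφ_even : ∀ z, φ (-z) = φ z)
    (hφ_zero : φ 0 = 0)
    (hφ_es_dom : (interior {z | φ z ≠ ⊤}).Nonempty)
    (hφ_es_diff : DifferentiableOn ℝ (fun z => (φ z).toReal) (interior {z | φ z ≠ ⊤}))
    (hφ_es_blow : ∀ w ∈ frontier {z | φ z ≠ ⊤}, ∀ seq : ℕ → EuclideanSpace ℝ (Fin n),
      (∀ k, seq k ∈ interior {z | φ z ≠ ⊤}) → Tendsto seq atTop (𝓝 w) →
      Tendsto (fun k => ‖gradient (fun z => (φ z).toReal) (seq k)‖) atTop atTop)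
    (μφ : ℝ) (hμφ : 0 < μφ)
    (hφ_sconv : ∀ z w : EuclideanSpace ℝ (Fin n), ∀ t : ℝ, 0 ≤ t → t ≤ 1 →
      φ (t • z + (1 - t) • w) + ((μφ / 2 * (t * (1 - t)) * ‖z - w‖ ^ 2 : ℝ) : EReal)
        ≤ (t : EReal) * φ z + ((1 - t : ℝ) : EReal) * φ w)
    (φs : EuclideanSpace ℝ (Fin n) → ℝ)
    (hφs_conj : ∀ y, (φs y : EReal) = ⨆ z, (((⟪z, y⟫ : ℝ) : EReal) - φ z))
    (gφs : EuclideanSpace ℝ (Fin n) → EuclideanSpace ℝ (Fin n))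
    (hgφs : ∀ y, HasGradientAt φs (gφs y) y)
    (hg_lip : ∀ y w, ‖gφs y - gφs w‖ ≤ (1 / μφ) * ‖y - w‖)
    (hg_zero : gφs 0 = 0)
    (xstar : EuclideanSpace ℝ (Fin n))
    (x₀ : EuclideanSpace ℝ (Fin n)) (u : ℝ → EuclideanSpace ℝ (Fin n)) (x : ℝ → EuclideanSpace ℝ (Fin n))
    (hu_loc : ∀ T : ℝ, IntervalIntegrable u volume 0 T)
    (hx_init : x 0 = x₀)
    (hx_ac : ∀ t ∈ Ici (0:ℝ), x t = x₀ + ∫ s in (0:ℝ)..t, u s)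
    (hu_fin : ∀ t : ℝ, φ (-(u t)) ≠ ⊤)
    (hq_int : ∀ T : ℝ, IntervalIntegrable
      (fun s => φs (f' (x s)) + (φ (-(u s))).toReal + ⟪u s, xstar⟫) volume 0 T)
    :
    (∀ t ∈ Ici (0:ℝ),
        (f x₀ - f (fs' xstar) - ⟪f' (fs' xstar), x₀ - fs' xstar⟫)
            - (f (x t) - f (fs' xstar) - ⟪f' (fs' xstar), x t - fs' xstar⟫)
          ≤ ∫ s in (0:ℝ)..t, (φs (f' (x s)) + (φ (-(u s))).toReal + ⟪u s, xstar⟫)) ∧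
      (Tendsto (fun t => f' (x t)) atTop (𝓝 xstar) →
        ∀ J : ℝ,
          Tendsto (fun T => ∫ s in (0:ℝ)..T,
              (φs (f' (x s)) + (φ (-(u s))).toReal + ⟪u s, xstar⟫)) atTop (𝓝 J) →
          f x₀ - f (fs' xstar) - ⟪f' (fs' xstar), x₀ - fs' xstar⟫ ≤ J) := by
  have hconv : ConvexOn ℝ Set.univ f := hf_sconv.convexOn
  have hgrad : ∀ z w, ⟪f' z, w - z⟫ ≤ f w - f z := fun z w => aux_grad_ineq hconv z w (hf' z)
  have hf'cont : Continuous f' := by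
    have h1 : f' = fun z =>
        (InnerProductSpace.toDual ℝ (EuclideanSpace ℝ (Fin n))).symm (fderiv ℝ f z) := by
      funext z
      rw [(hasGradientAt_iff_hasFDerivAt.1 (hf' z)).fderiv]
      simp
    rw [h1]
    exact (LinearIsometryEquiv.continuous _).comp (hf.continuous_fderiv (by norm_num))
  set ystar : EuclideanSpace ℝ (Fin n) := fs' xstar with hystar
  have hfy : f' ystar = xstar := hfs'_right xstar
  set V : EuclideanSpace ℝ (Fin n) → ℝ := fun z => f z - f ystar - ⟪xstar, z - ystar⟫ with hVdef
  -- basic facts about V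
  have hVz : ∀ z w, V z - V w ≤ ⟪xstar - f' z, w - z⟫ := by
    intro z w
    have h1 := hgrad z w
    simp only [inner_sub_right] at h1
    simp only [hVdef, inner_sub_left, inner_sub_right]
    linarith
  have hV0 : ∀ z, 0 ≤ V z := by
    intro z
    have h := hgrad ystar z
    rw [hfy] at h
    simp only [inner_sub_right] at h
    simp only [hVdef, inner_sub_right]
    linarith
  -- the trajectory as a continuous curve
  have hu_all : ∀ a b : ℝ, IntervalIntegrable u volume a b :=
    fun a b => (hu_loc a).symm.trans (hu_loc b)
  set y : ℝ → EuclideanSpace ℝ (Fin n) := fun t => x₀ + ∫ s in (0:ℝ)..t, u s with hydef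
  have hy_cont : Continuous y :=
    continuous_const.add (intervalIntegral.continuous_primitive hu_all 0)
  have hy0 : y 0 = x₀ := by simp [hydef]
  have hyc : Continuous (fun s => f' (y s)) := hf'cont.comp hy_cont
  have hydiff : ∀ a b : ℝ, y b - y a = ∫ s in a..b, u s := by
    intro a b
    simp only [hydef]
    rw [add_sub_add_left_eq_sub,
      ← intervalIntegral.integral_interval_sub_left (hu_all 0 b) (hu_all 0 a)]
  -- integrability of inner products against u
  have hIcont : ∀ (c : ℝ → EuclideanSpace ℝ (Fin n)), Continuous c → ∀ a b : ℝ,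
      IntervalIntegrable (fun s => ⟪c s, u s⟫) volume a b := by
    intro c hc a b
    obtain ⟨M, hM⟩ := isCompact_uIcc.exists_bound_of_continuousOn
      (hc.continuousOn : ContinuousOn c (uIcc a b))
    rw [intervalIntegrable_iff]
    have hu' : IntegrableOn u (Set.uIoc a b) volume := (hu_all a b).def'
    refine Integrable.mono' (((hu_all a b).norm.const_mul M).def') ?_ ?_
    · exact (hc.aestronglyMeasurable.restrict).inner hu'.aestronglyMeasurable
    · filter_upwards [ae_restrict_mem measurableSet_uIoc] with s hs
      have hs' : s ∈ uIcc a b := uIoc_subset_uIcc hs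
      calc ‖⟪c s, u s⟫‖ = |⟪c s, u s⟫| := rfl
        _ ≤ ‖c s‖ * ‖u s‖ := abs_real_inner_le_norm _ _
        _ ≤ M * ‖u s‖ := mul_le_mul_of_nonneg_right (hM s hs') (norm_nonneg _)
  -- Fenchel--Young
  have hFY : ∀ s : ℝ, ⟪xstar - f' (x s), u s⟫
      ≤ φs (f' (x s)) + (φ (-(u s))).toReal + ⟪u s, xstar⟫ := by
    intro s
    have hne_top := hu_fin s
    have hne_bot : φ (-(u s)) ≠ ⊥ := by
      intro h
      have h0 := hφ_nonneg (-(u s))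
      rw [h] at h0
      exact absurd h0 (by simp)
    have h1 : ((⟪-(u s), f' (x s)⟫ : ℝ) : EReal) - φ (-(u s)) ≤ (φs (f' (x s)) : EReal) := by
      rw [hφs_conj (f' (x s))]
      exact le_iSup (fun z => (((⟪z, f' (x s)⟫ : ℝ) : EReal) - φ z)) (-(u s))
    rw [show φ (-(u s)) = (((φ (-(u s))).toReal : ℝ) : EReal) from
        (EReal.coe_toReal hne_top hne_bot).symm,
      ← EReal.coe_sub, EReal.coe_le_coe_iff] at h1
    have h3 : ⟪-(u s), f' (x s)⟫ = -⟪f' (x s), u s⟫ := by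
      rw [inner_neg_left, real_inner_comm]
    rw [h3] at h1
    have h4 : ⟪u s, xstar⟫ = ⟪xstar, u s⟫ := real_inner_comm _ _
    simp only [inner_sub_left]
    linarith
  -- key discretization inequality
  have key : ∀ t : ℝ, 0 ≤ t →
      V (y 0) - V (y t) ≤ ∫ s in (0:ℝ)..t, ⟪xstar - f' (y s), u s⟫ := by
    intro t ht
    have hnn : (0:ℝ) ≤ ∫ s in (0:ℝ)..t, ‖u s‖ :=
      intervalIntegral.integral_nonneg ht (fun s _ => norm_nonneg _)
    set C : ℝ := (∫ s in (0:ℝ)..t, ‖u s‖) + 1 with hCdef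
    have hCpos : 0 < C := by rw [hCdef]; linarith
    refine aux_le_of_eps ?_
    intro ε hε
    have hεC : 0 < ε / C := div_pos hε hCpos
    have hUC := (isCompact_Icc (a := (0:ℝ)) (b := t)).uniformContinuousOn_of_continuous
      hyc.continuousOn
    obtain ⟨δ, hδpos, hδ⟩ := Metric.uniformContinuousOn_iff.1 hUC (ε / C) hεC
    obtain ⟨N, hN⟩ := exists_nat_gt (t / δ)
    have hNpos : 0 < (N : ℝ) := lt_of_le_of_lt (div_nonneg ht hδpos.le) hN
    have hstep : t / N < δ := by
      rw [div_lt_iff₀ hNpos]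
      have h1 := (div_lt_iff₀ hδpos).1 hN
      nlinarith
    have hstep0 : 0 ≤ t / N := div_nonneg ht hNpos.le
    set a : ℕ → ℝ := fun i => (i : ℝ) * (t / N) with hadef
    have ha0 : a 0 = 0 := by simp [hadef]
    have haN : a N = t := by
      simp only [hadef]
      field_simp
    have hamono : ∀ i : ℕ, a i ≤ a (i + 1) := by
      intro i
      simp only [hadef]
      push_cast
      nlinarith [hstep0]
    have hamem : ∀ i : ℕ, i ≤ N → a i ∈ Icc (0:ℝ) t := by
      intro i hi
      constructor
      · exact mul_nonneg (Nat.cast_nonneg i) hstep0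
      · calc (i:ℝ) * (t/N) ≤ (N:ℝ) * (t/N) :=
            mul_le_mul_of_nonneg_right (by exact_mod_cast hi) hstep0
          _ = t := by field_simp
    have hdiffa : ∀ i : ℕ, a (i+1) - a i = t / N := by
      intro i; simp only [hadef]; push_cast; ring
    set G : ℝ → ℝ := fun s => ⟪xstar - f' (y s), u s⟫ + (ε / C) * ‖u s‖ with hGdef
    have hGint : ∀ p q : ℝ, IntervalIntegrable G volume p q := fun p q =>
      (hIcont _ (continuous_const.sub hyc) p q).add ((hu_all p q).norm.const_mul _)
    have hstep_ineq : ∀ i : ℕ, i < N →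
        V (y (a i)) - V (y (a (i+1))) ≤ ∫ s in a i..a (i+1), G s := by
      intro i hi
      have h1 : V (y (a i)) - V (y (a (i+1)))
          ≤ ⟪xstar - f' (y (a i)), y (a (i+1)) - y (a i)⟫ := hVz _ _
      rw [hydiff (a i) (a (i+1))] at h1
      have h2 : ⟪xstar - f' (y (a i)), ∫ s in a i..a (i+1), u s⟫
          = ∫ s in a i..a (i+1), ⟪xstar - f' (y (a i)), u s⟫ := by
        have h3 := (innerSL ℝ (xstar - f' (y (a i)))).intervalIntegral_comp_comm
          (hu_all (a i) (a (i+1)))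
        simp only [innerSL_apply_apply] at h3
        exact h3.symm
      rw [h2] at h1
      refine h1.trans (intervalIntegral.integral_mono_on (hamono i)
        (hIcont _ continuous_const _ _) (hGint _ _) ?_)
      intro s hs
      have hsmem : s ∈ Icc (0:ℝ) t :=
        ⟨(hamem i hi.le).1.trans hs.1, hs.2.trans (hamem (i+1) hi).2⟩
      have hdist : dist s (a i) < δ := by
        rw [Real.dist_eq, abs_of_nonneg (by linarith [hs.1])]
        have := hs.2
        have hd := hdiffa i
        linarith
      have hF := hδ s hsmem (a i) (hamem i hi.le) hdist
      have heq : ⟪xstar - f' (y (a i)), u s⟫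
          = ⟪xstar - f' (y s), u s⟫ + ⟪f' (y s) - f' (y (a i)), u s⟫ := by
        simp only [inner_sub_left]
        ring
      have hb : ⟪f' (y s) - f' (y (a i)), u s⟫ ≤ (ε/C) * ‖u s‖ := by
        refine (real_inner_le_norm _ _).trans ?_
        refine mul_le_mul_of_nonneg_right ?_ (norm_nonneg _)
        rw [← dist_eq_norm]
        exact hF.le
      simp only [hGdef]
      linarith
    have hsum : ∑ i ∈ Finset.range N, ∫ s in a i..a (i+1), G s = ∫ s in (a 0)..(a N), G s :=
      intervalIntegral.sum_integral_adjacent_intervals (fun k _ => hGint _ _)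
    have htel : V (y (a 0)) - V (y (a N))
        = ∑ i ∈ Finset.range N, (V (y (a i)) - V (y (a (i+1)))) :=
      (Finset.sum_range_sub' (fun i => V (y (a i))) N).symm
    have hmain : V (y 0) - V (y t) ≤ ∫ s in (0:ℝ)..t, G s := by
      rw [← ha0, ← haN]
      calc V (y (a 0)) - V (y (a N))
          = ∑ i ∈ Finset.range N, (V (y (a i)) - V (y (a (i+1)))) := htel
        _ ≤ ∑ i ∈ Finset.range N, ∫ s in a i..a (i+1), G s :=
          Finset.sum_le_sum (fun i hi => hstep_ineq i (Finset.mem_range.1 hi))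
        _ = ∫ s in (a 0)..(a N), G s := hsum
    have hsplit : ∫ s in (0:ℝ)..t, G s
        = (∫ s in (0:ℝ)..t, ⟪xstar - f' (y s), u s⟫)
          + (ε/C) * ∫ s in (0:ℝ)..t, ‖u s‖ := by
      simp only [hGdef]
      rw [intervalIntegral.integral_add (hIcont (fun s => xstar - f' (y s)) (continuous_const.sub hyc) 0 t)
        ((hu_all 0 t).norm.const_mul _), intervalIntegral.integral_const_mul]
    have hfin : (ε/C) * ∫ s in (0:ℝ)..t, ‖u s‖ ≤ ε := by
      have h1 : (∫ s in (0:ℝ)..t, ‖u s‖) ≤ C := by rw [hCdef]; linarith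
      calc (ε/C) * ∫ s in (0:ℝ)..t, ‖u s‖ ≤ (ε/C) * C :=
            mul_le_mul_of_nonneg_left h1 hεC.le
        _ = ε := div_mul_cancel₀ ε hCpos.ne'
    rw [hsplit] at hmain
    exact hmain.trans (add_le_add_right hfin _)
  -- part 1
  have part1 : ∀ t ∈ Ici (0:ℝ), V x₀ - V (x t)
      ≤ ∫ s in (0:ℝ)..t, (φs (f' (x s)) + (φ (-(u s))).toReal + ⟪u s, xstar⟫) := by
    intro t ht
    have hxt : x t = y t := by rw [hx_ac t ht]
    have h1 := key t ht
    rw [hy0] at h1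
    rw [hxt]
    refine h1.trans ?_
    refine intervalIntegral.integral_mono_on ht (hIcont _ (continuous_const.sub hyc) 0 t)
      (hq_int t) ?_
    intro s hs
    have hxs : x s = y s := by rw [hx_ac s hs.1]
    calc ⟪xstar - f' (y s), u s⟫ = ⟪xstar - f' (x s), u s⟫ := by rw [hxs]
      _ ≤ _ := hFY s
  constructor
  · intro t ht
    simp only [hfy]
    exact part1 t ht
  · intro hp J hJ
    simp only [hfy]
    have h2 : ∀ᶠ z in cocompact (EuclideanSpace ℝ (Fin n)), ‖xstar‖ + 2 ≤ f z / ‖z‖ :=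
      hf_coer.eventually (eventually_ge_atTop _)
    obtain ⟨K, hKc, hKs⟩ := (hasBasis_cocompact.eventually_iff).1 h2
    obtain ⟨r, hr⟩ := hKc.isBounded.subset_closedBall 0
    set R : ℝ := max r |f 0| with hRdef
    have hbound : ∀ z, ‖f' z - xstar‖ ≤ 1 → ‖z‖ ≤ R := by
      intro z hz
      by_cases hzK : z ∈ K
      · have h3 := hr hzK
        rw [Metric.mem_closedBall, dist_zero_right] at h3
        exact h3.trans (le_max_left _ _)
      · have hfz : ‖xstar‖ + 2 ≤ f z / ‖z‖ := hKs hzK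
        have hz0 : z ≠ 0 := by
          rintro rfl
          simp only [norm_zero, div_zero] at hfz
          nlinarith [norm_nonneg xstar]
        have hzpos : 0 < ‖z‖ := norm_pos_iff.2 hz0
        have h4 : (‖xstar‖ + 2) * ‖z‖ ≤ f z := by
          rw [le_div_iff₀ hzpos] at hfz; exact hfz
        have h5 := hgrad z 0
        rw [zero_sub, inner_neg_right] at h5
        have h6 : ⟪f' z, z⟫ ≤ ‖f' z‖ * ‖z‖ := real_inner_le_norm _ _
        have h7 : ‖f' z‖ ≤ ‖xstar‖ + 1 := by
          calc ‖f' z‖ = ‖(f' z - xstar) + xstar‖ := by rw [sub_add_cancel]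
            _ ≤ ‖f' z - xstar‖ + ‖xstar‖ := norm_add_le _ _
            _ ≤ ‖xstar‖ + 1 := by linarith
        have h8 : ‖z‖ ≤ f 0 := by nlinarith
        exact h8.trans ((le_abs_self _).trans (le_max_right _ _))
    have hsub : Tendsto (fun T => f' (x T) - xstar) atTop (𝓝 0) := by
      simpa using hp.sub_const xstar
    have hnorm0 : Tendsto (fun T => ‖f' (x T) - xstar‖) atTop (𝓝 0) := by
      simpa using hsub.norm
    have hev1 : ∀ᶠ T in atTop, ‖f' (x T) - xstar‖ ≤ 1 := by
      filter_upwards [hnorm0.eventually_lt_const zero_lt_one] with T h using h.le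
    have hVle : ∀ᶠ T in atTop, V (x T) ≤ ‖f' (x T) - xstar‖ * (R + ‖ystar‖) := by
      filter_upwards [hev1] with T h
      have hzb : ‖x T‖ ≤ R := hbound _ h
      have h1 : V (x T) ≤ ⟪f' (x T) - xstar, x T - ystar⟫ := by
        have hz := hVz (x T) ystar
        have hVy : V ystar = 0 := by simp [hVdef]
        rw [hVy, sub_zero] at hz
        refine hz.trans (le_of_eq ?_)
        rw [show xstar - f' (x T) = -(f' (x T) - xstar) by abel,
          show ystar - x T = -(x T - ystar) by abel, inner_neg_neg]
      refine h1.trans ?_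
      calc ⟪f' (x T) - xstar, x T - ystar⟫
          ≤ ‖f' (x T) - xstar‖ * ‖x T - ystar‖ := real_inner_le_norm _ _
        _ ≤ ‖f' (x T) - xstar‖ * (R + ‖ystar‖) :=
            mul_le_mul_of_nonneg_left ((norm_sub_le _ _).trans (by linarith)) (norm_nonneg _)
    have hVtend : Tendsto (fun T => V (x T)) atTop (𝓝 0) := by
      have hub : Tendsto (fun T => ‖f' (x T) - xstar‖ * (R + ‖ystar‖)) atTop (𝓝 0) := by
        simpa using hnorm0.mul_const (R + ‖ystar‖)
      refine tendsto_of_tendsto_of_tendsto_of_le_of_le' tendsto_const_nhds hub ?_ hVle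
      exact Eventually.of_forall (fun T => hV0 _)
    have hadd : Tendsto (fun T => V (x T) + ∫ s in (0:ℝ)..T,
        (φs (f' (x s)) + (φ (-(u s))).toReal + ⟪u s, xstar⟫)) atTop (𝓝 (0 + J)) :=
      hVtend.add hJ
    rw [zero_add] at hadd
    show V x₀ ≤ J
    refine ge_of_tendsto hadd ?_
    filter_upwards [eventually_ge_atTop (0:ℝ)] with T hT
    have hp1 := part1 T hT
    linarith
end
end

section
/- Fix x⋆ ∈ ℝⁿ, set y⋆ := ∇f*(x⋆), V(x) := D_f(x, y⋆), and q(x, u) := φ*(∇f(x)) + φ(−u) + ⟨u, x⋆⟩. Let x : [0, ∞) → ℝⁿ be the unique global solution of the closed-loop system ẋ(t) = −∇φ*(∇f(x(t))) with x(0) = x₀, and suppose the feedback control u(t) := −∇φ*(∇f(x(t))) is stabilizing, i.e. ∇f(x(t)) → x⋆ as t → ∞. Then (d/dt) V(x(t)) + q(x(t), u(t)) = 0 for all t ≥ 0, and the infinite-horizon cost equals the value function: J_∞(x₀, u) := ∫₀^∞ q(x(t), u(t)) dt = V(x₀) = D_f(x₀, y⋆). Hence u is an optimal stabilizing control. -/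
open MeasureTheory Filter Topology Set
open scoped RealInnerProductSpace

noncomputable section

lemma lsc_min_aux {E : Type*} [NormedAddCommGroup E] [ProperSpace E] {K : Set E}
    (hK : IsCompact K) (hne : K.Nonempty) {g : E → EReal}
    (hg : LowerSemicontinuous g) : ∃ z ∈ K, ∀ w ∈ K, g z ≤ g w := by
  obtain ⟨u, -, hu, humem⟩ := exists_seq_tendsto_sInf (hne.image g) (OrderBot.bddBelow _)
  choose seq hseqK hseqf using humem
  obtain ⟨zbar, hzK, ψ, hψ, hψt⟩ := hK.tendsto_subseq hseqK
  refine ⟨zbar, hzK, fun w hw => ?_⟩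
  have hle : g zbar ≤ sInf (g '' K) := by
    by_contra h
    push_neg at h
    obtain ⟨c, hc1, hc2⟩ := exists_between h
    have hev : ∀ᶠ j in atTop, c < g (seq (ψ j)) := hψt.eventually (hg zbar c hc2)
    have hev2 : ∀ᶠ j in atTop, g (seq (ψ j)) < c := by
      have h3 : Tendsto (fun j => u (ψ j)) atTop (𝓝 (sInf (g '' K))) :=
        hu.comp hψ.tendsto_atTop
      have h4 := h3.eventually_lt_const hc1
      simpa only [hseqf] using h4
    obtain ⟨j, hj1, hj2⟩ := (hev.and hev2).exists
    exact absurd hj1 (not_lt.2 hj2.le)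
  exact hle.trans (sInf_le (mem_image_of_mem g hw))

lemma fenchel_aux {n : ℕ} (φ : EuclideanSpace ℝ (Fin n) → EReal)
    (hφ_lsc : LowerSemicontinuous φ)
    (hφ_nonneg : ∀ z, 0 ≤ φ z)
    (hφ_even : ∀ z, φ (-z) = φ z)
    (hφ_zero : φ 0 = 0)
    (μφ : ℝ) (hμφ : 0 < μφ)
    (hφ_sconv : ∀ z w : EuclideanSpace ℝ (Fin n), ∀ t : ℝ, 0 ≤ t → t ≤ 1 →
      φ (t • z + (1 - t) • w) + ((μφ / 2 * (t * (1 - t)) * ‖z - w‖ ^ 2 : ℝ) : EReal)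
        ≤ (t : EReal) * φ z + ((1 - t : ℝ) : EReal) * φ w)
    (φs : EuclideanSpace ℝ (Fin n) → ℝ)
    (hφs_conj : ∀ y, (φs y : EReal) = ⨆ z, (((⟪z, y⟫ : ℝ) : EReal) - φ z))
    (gφs : EuclideanSpace ℝ (Fin n) → EuclideanSpace ℝ (Fin n))
    (hgφs : ∀ y, HasGradientAt φs (gφs y) y)
    (y : EuclideanSpace ℝ (Fin n)) :
    φ (gφs y) = ((⟪gφs y, y⟫ - φs y : ℝ) : EReal) := by
  have hnb : ∀ z, φ z ≠ ⊥ := fun z =>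
    ((lt_of_lt_of_le (EReal.bot_lt_zero) (hφ_nonneg z)).ne')
  have hquad : ∀ z : EuclideanSpace ℝ (Fin n), ((μφ / 2 * ‖z‖ ^ 2 : ℝ) : EReal) ≤ φ z := by
    intro z
    have h := hφ_sconv z (-z) (1/2) (by norm_num) (by norm_num)
    have e1 : (1/2 : ℝ) • z + (1 - 1/2 : ℝ) • (-z) = 0 := by
      have h12 : (1 - (1:ℝ)/2) = 1/2 := by norm_num
      rw [h12, smul_neg, add_neg_cancel]
    have e2 : ‖z - -z‖ ^ 2 = 4 * ‖z‖ ^ 2 := by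
      rw [sub_neg_eq_add, ← two_smul ℝ z, norm_smul]
      simp; ring
    rw [e1, hφ_zero, e2, hφ_even z, zero_add] at h
    rcases eq_or_ne (φ z) ⊤ with ht | ht
    · rw [ht]; exact le_top
    · lift (φ z) to ℝ using ⟨ht, hnb z⟩ with r hr
      rw [← EReal.coe_mul, ← EReal.coe_mul, ← EReal.coe_add] at h
      rw [EReal.coe_le_coe_iff] at h ⊢
      nlinarith [h]
  have hub : ∀ z, ((⟪z, y⟫ : ℝ) : EReal) - φ z ≤ (φs y : EReal) := by
    intro z
    rw [hφs_conj y]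
    exact le_iSup (fun z => ((⟪z, y⟫ : ℝ) : EReal) - φ z) z
  obtain ⟨zb, hglob⟩ : ∃ zb, (∀ w, φ zb + ((-⟪zb, y⟫ : ℝ) : EReal)
      ≤ φ w + ((-⟪w, y⟫ : ℝ) : EReal)) := by
    set ψf : EuclideanSpace ℝ (Fin n) → EReal :=
      fun z => φ z + ((-⟪z, y⟫ : ℝ) : EReal) with hψf
    have hcont : Continuous fun z : EuclideanSpace ℝ (Fin n) => ((-⟪z, y⟫ : ℝ) : EReal) :=
      continuous_coe_real_ereal.comp ((continuous_id.inner continuous_const).neg)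
    have hψlsc : LowerSemicontinuous ψf := by
      apply hφ_lsc.add' hcont.lowerSemicontinuous
      intro z
      apply EReal.continuousAt_add
      · exact Or.inr (EReal.coe_ne_bot _)
      · exact Or.inr (EReal.coe_ne_top _)
    set R : ℝ := 2 * ‖y‖ / μφ + 1 with hR
    have hR0 : 0 ≤ R := by positivity
    obtain ⟨zb, hzbK, hzbmin⟩ := lsc_min_aux
      (isCompact_closedBall (0 : EuclideanSpace ℝ (Fin n)) R)
      ⟨0, Metric.mem_closedBall_self hR0⟩ hψlsc
    refine ⟨zb, fun w => ?_⟩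
    by_cases hw : w ∈ Metric.closedBall (0 : EuclideanSpace ℝ (Fin n)) R
    · exact hzbmin w hw
    · have hnorm : R < ‖w‖ := by
        simpa [Metric.mem_closedBall, dist_zero_right, not_le] using hw
      have h1 : ψf zb ≤ 0 := by
        have h0 := hzbmin 0 (Metric.mem_closedBall_self hR0)
        simpa [ψf, hφ_zero] using h0
      have h2 : (0 : EReal) ≤ ψf w := by
        have hq := hquad w
        have hstep : ((μφ / 2 * ‖w‖ ^ 2 : ℝ) : EReal) + ((-⟪w, y⟫ : ℝ) : EReal)
            ≤ ψf w := add_le_add_left hq _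
        refine le_trans ?_ hstep
        rw [← EReal.coe_add]
        have hpos : (0:ℝ) ≤ μφ / 2 * ‖w‖ ^ 2 + -⟪w, y⟫ := by
          have hin : ⟪w, y⟫ ≤ ‖w‖ * ‖y‖ := real_inner_le_norm w y
          have hy : ‖y‖ ≤ μφ / 2 * ‖w‖ := by
            have h5 : 2 * ‖y‖ / μφ < ‖w‖ := lt_of_le_of_lt (by simp [hR]) hnorm
            rw [div_lt_iff₀ hμφ] at h5
            nlinarith
          nlinarith [norm_nonneg w, norm_nonneg y, hnorm, hR0]
        exact_mod_cast hpos
      exact h1.trans h2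
  have hzbfin : φ zb ≠ ⊤ := by
    intro ht
    have h0 := hglob 0
    rw [ht, hφ_zero, zero_add] at h0
    have htop : (⊤ : EReal) + ((-⟪zb, y⟫ : ℝ) : EReal) = ⊤ :=
      EReal.top_add_of_ne_bot (EReal.coe_ne_bot _)
    rw [htop] at h0
    exact absurd h0 (by simp)
  obtain ⟨r, hr⟩ : ∃ r : ℝ, φ zb = (r : EReal) := by
    lift (φ zb) to ℝ using ⟨hzbfin, hnb zb⟩ with r
    exact ⟨r, rfl⟩
  have hkey1 : φs y = ⟪zb, y⟫ - r := by
    have hle1 : (φs y : EReal) ≤ ((⟪zb, y⟫ - r : ℝ) : EReal) := by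
      rw [hφs_conj]
      apply iSup_le
      intro z
      rcases eq_or_ne (φ z) ⊤ with ht | ht
      · rw [ht, EReal.sub_top]
        exact bot_le
      · have hzb := hglob z
        lift (φ z) to ℝ using ⟨ht, hnb z⟩ with s hs
        rw [hr, ← EReal.coe_add, ← EReal.coe_add] at hzb
        rw [EReal.coe_le_coe_iff] at hzb
        rw [← EReal.coe_sub, EReal.coe_le_coe_iff]
        linarith
    have hge1 : ((⟪zb, y⟫ - r : ℝ) : EReal) ≤ (φs y : EReal) := by
      have h := hub zb
      rw [hr, ← EReal.coe_sub] at h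
      exact h
    have := le_antisymm hle1 hge1
    exact_mod_cast this
  have hmin : ∀ w, φs y - ⟪zb, y⟫ ≤ φs w - ⟪zb, w⟫ := by
    intro w
    have h1 : ((⟪zb, w⟫ - r : ℝ) : EReal) ≤ (φs w : EReal) := by
      rw [hφs_conj w]
      refine le_trans (le_of_eq ?_) (le_iSup (fun z => ((⟪z, w⟫ : ℝ) : EReal) - φ z) zb)
      rw [hr, ← EReal.coe_sub]
    have h1' : ⟪zb, w⟫ - r ≤ φs w := by exact_mod_cast h1
    rw [hkey1]; linarith
  have hlocmin : IsLocalMin (fun w => φs w - ⟪zb, w⟫) y :=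
    Filter.Eventually.of_forall fun w => hmin w
  have h2 : HasFDerivAt (fun w : EuclideanSpace ℝ (Fin n) => ⟪zb, w⟫)
      ((InnerProductSpace.toDual ℝ (EuclideanSpace ℝ (Fin n)) zb :
        EuclideanSpace ℝ (Fin n) →L[ℝ] ℝ)) y :=
    (InnerProductSpace.toDual ℝ (EuclideanSpace ℝ (Fin n)) zb).hasFDerivAt
  have hder : HasFDerivAt (fun w => φs w - ⟪zb, w⟫)
      ((InnerProductSpace.toDual ℝ (EuclideanSpace ℝ (Fin n))) (gφs y)
        - (InnerProductSpace.toDual ℝ (EuclideanSpace ℝ (Fin n))) zb) y :=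
    ((hgφs y).hasFDerivAt).sub h2
  have hzero := hlocmin.hasFDerivAt_eq_zero hder
  have hzb_eq : gφs y = zb :=
    (InnerProductSpace.toDual ℝ (EuclideanSpace ℝ (Fin n))).injective (sub_eq_zero.mp hzero)
  rw [hzb_eq, hr, hkey1]
  norm_num

theorem stmt_16 (n : ℕ)
    (f : EuclideanSpace ℝ (Fin n) → ℝ) (f' : EuclideanSpace ℝ (Fin n) → EuclideanSpace ℝ (Fin n))
    (hf : ContDiff ℝ 2 f)
    (hf' : ∀ z, HasGradientAt f (f' z) z)
    (hf_lb : ∀ α : ℝ, Bornology.IsBounded {z | f z ≤ α})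
    (hf_sconv : StrictConvexOn ℝ Set.univ f)
    (hf_coer : Tendsto (fun z => f z / ‖z‖) (Filter.cocompact (EuclideanSpace ℝ (Fin n))) atTop)
    (fs' : EuclideanSpace ℝ (Fin n) → EuclideanSpace ℝ (Fin n))
    (hfs'_left : ∀ z, fs' (f' z) = z)
    (hfs'_right : ∀ y, f' (fs' y) = y)
    (φ : EuclideanSpace ℝ (Fin n) → EReal)
    (hφ_proper : ∃ z, φ z ≠ ⊤)
    (hφ_lsc : LowerSemicontinuous φ)
    (hφ_nonneg : ∀ z, 0 ≤ φ z)
    (hφ_even : ∀ z, φ (-z) = φ z)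
    (hφ_zero : φ 0 = 0)
    (hφ_es_dom : (interior {z | φ z ≠ ⊤}).Nonempty)
    (hφ_es_diff : DifferentiableOn ℝ (fun z => (φ z).toReal) (interior {z | φ z ≠ ⊤}))
    (hφ_es_blow : ∀ w ∈ frontier {z | φ z ≠ ⊤}, ∀ seq : ℕ → EuclideanSpace ℝ (Fin n),
      (∀ k, seq k ∈ interior {z | φ z ≠ ⊤}) → Tendsto seq atTop (𝓝 w) →
      Tendsto (fun k => ‖gradient (fun z => (φ z).toReal) (seq k)‖) atTop atTop)
    (μφ : ℝ) (hμφ : 0 < μφ)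
    (hφ_sconv : ∀ z w : EuclideanSpace ℝ (Fin n), ∀ t : ℝ, 0 ≤ t → t ≤ 1 →
      φ (t • z + (1 - t) • w) + ((μφ / 2 * (t * (1 - t)) * ‖z - w‖ ^ 2 : ℝ) : EReal)
        ≤ (t : EReal) * φ z + ((1 - t : ℝ) : EReal) * φ w)
    (φs : EuclideanSpace ℝ (Fin n) → ℝ)
    (hφs_conj : ∀ y, (φs y : EReal) = ⨆ z, (((⟪z, y⟫ : ℝ) : EReal) - φ z))
    (gφs : EuclideanSpace ℝ (Fin n) → EuclideanSpace ℝ (Fin n))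
    (hgφs : ∀ y, HasGradientAt φs (gφs y) y)
    (hg_lip : ∀ y w, ‖gφs y - gφs w‖ ≤ (1 / μφ) * ‖y - w‖)
    (hg_zero : gφs 0 = 0)
    (xstar : EuclideanSpace ℝ (Fin n))
    (x₀ : EuclideanSpace ℝ (Fin n)) (x : ℝ → EuclideanSpace ℝ (Fin n))
    (hx_init : x 0 = x₀)
    (hode : ∀ t ∈ Ici (0:ℝ), HasDerivWithinAt x (-gφs (f' (x t))) (Ici 0) t)
    (hstab : Tendsto (fun t => f' (x t)) atTop (𝓝 xstar))
    :
    (∀ t ∈ Ici (0:ℝ),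
        φ (gφs (f' (x t))) ≠ ⊤ ∧
        HasDerivWithinAt
          (fun s => f (x s) - f (fs' xstar) - ⟪f' (fs' xstar), x s - fs' xstar⟫)
          (-(φs (f' (x t)) + (φ (gφs (f' (x t)))).toReal + ⟪-gφs (f' (x t)), xstar⟫))
          (Ici 0) t) ∧
      Tendsto
        (fun T => ∫ s in (0:ℝ)..T,
          (φs (f' (x s)) + (φ (gφs (f' (x s)))).toReal + ⟪-gφs (f' (x s)), xstar⟫))
        atTop
        (𝓝 (f x₀ - f (fs' xstar) - ⟪f' (fs' xstar), x₀ - fs' xstar⟫)) := by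
  have key : ∀ y, φ (gφs y) = ((⟪gφs y, y⟫ - φs y : ℝ) : EReal) :=
    fenchel_aux φ hφ_lsc hφ_nonneg hφ_even hφ_zero μφ hμφ hφ_sconv φs hφs_conj gφs hgφs
  rw [hfs'_right xstar]
  set q : ℝ → ℝ :=
    fun s => φs (f' (x s)) + (φ (gφs (f' (x s)))).toReal + ⟪-gφs (f' (x s)), xstar⟫ with hqdef
  set V : ℝ → ℝ := fun s => f (x s) - f (fs' xstar) - ⟪xstar, x s - fs' xstar⟫ with hVdef
  -- the closed-loop derivative identity
  have main1 : ∀ t ∈ Ici (0:ℝ), HasDerivWithinAt V (-(q t)) (Ici 0) t := by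
    intro t ht
    have hx' := hode t ht
    have d1 : HasDerivWithinAt (fun s => f (x s)) ⟪f' (x t), -gφs (f' (x t))⟫ (Ici 0) t := by
      simpa [Function.comp_def] using (hf' (x t)).hasFDerivAt.comp_hasDerivWithinAt t hx'
    have d2 : HasDerivWithinAt (fun s => ⟪xstar, x s - fs' xstar⟫)
        ⟪xstar, -gφs (f' (x t))⟫ (Ici 0) t := by
      have h0 : HasDerivWithinAt (fun s => x s - fs' xstar) (-gφs (f' (x t))) (Ici 0) t :=
        hx'.sub_const _
      simpa [Function.comp_def] using (innerSL ℝ xstar).hasFDerivAt.comp_hasDerivWithinAt t h0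
    have dV := (d1.sub_const (f (fs' xstar))).sub d2
    have hval : -(q t) = ⟪f' (x t), -gφs (f' (x t))⟫ - ⟪xstar, -gφs (f' (x t))⟫ := by
      have hc1 : ⟪f' (x t), gφs (f' (x t))⟫ = ⟪gφs (f' (x t)), f' (x t)⟫ := real_inner_comm _ _
      have hc2 : ⟪xstar, gφs (f' (x t))⟫ = ⟪gφs (f' (x t)), xstar⟫ := real_inner_comm _ _
      simp only [hqdef, key (f' (x t)), EReal.toReal_coe, inner_neg_left, inner_neg_right]
      linarith
    rw [hval]
    exact dV
  -- continuity facts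
  have hf'cont : Continuous f' := by
    have hfd : ∀ z, fderiv ℝ f z
        = (InnerProductSpace.toDual ℝ (EuclideanSpace ℝ (Fin n))) (f' z) :=
      fun z => (hf' z).hasFDerivAt.fderiv
    have hcontfd : Continuous (fderiv ℝ f) := hf.continuous_fderiv (by norm_num)
    have hfe : f' = fun z =>
        (InnerProductSpace.toDual ℝ (EuclideanSpace ℝ (Fin n))).symm (fderiv ℝ f z) := by
      funext z
      rw [hfd z, LinearIsometryEquiv.symm_apply_apply]
    rw [hfe]
    exact (InnerProductSpace.toDual ℝ (EuclideanSpace ℝ (Fin n))).symm.continuous.comp hcontfd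
  have hgcont : Continuous gφs := by
    have hL : LipschitzWith (Real.toNNReal (1/μφ)) gφs := by
      apply LipschitzWith.of_dist_le_mul
      intro a b
      rw [dist_eq_norm, dist_eq_norm]
      calc ‖gφs a - gφs b‖ ≤ 1/μφ * ‖a - b‖ := hg_lip a b
        _ = (Real.toNNReal (1/μφ) : ℝ) * ‖a - b‖ := by
            rw [Real.coe_toNNReal _ (by positivity)]
    exact hL.continuous
  have hxc : ContinuousOn x (Ici 0) := fun t ht => (hode t ht).continuousWithinAt
  -- gradient inequality from convexity
  have hgradineq : ∀ z, f z ≤ f 0 + ⟪f' z, z⟫ := by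
    intro z
    set d : EuclideanSpace ℝ (Fin n) := -z with hd
    have hcurve : HasDerivAt (fun t : ℝ => z + t • d) d 0 := by
      simpa using ((hasDerivAt_id (0:ℝ)).smul_const d).const_add z
    have hg : HasDerivAt (fun t : ℝ => f (z + t • d)) ⟪f' z, d⟫ 0 := by
      have h0 : HasFDerivAt f ((InnerProductSpace.toDual ℝ _) (f' z)) (z + (0:ℝ) • d) := by
        simpa using (hf' z).hasFDerivAt
      simpa [Function.comp_def] using h0.comp_hasDerivAt 0 hcurve
    have hslope : Tendsto (slope (fun t : ℝ => f (z + t • d)) 0) (𝓝[>] 0) (𝓝 ⟪f' z, d⟫) :=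
      (hasDerivAt_iff_tendsto_slope.1 hg).mono_left
        (nhdsWithin_mono _ fun t ht => ne_of_gt ht)
    have hbound : ∀ᶠ t : ℝ in 𝓝[>] 0,
        slope (fun t : ℝ => f (z + t • d)) 0 t ≤ f (z + d) - f z := by
      filter_upwards [Ioo_mem_nhdsGT_of_mem (by norm_num : (0:ℝ) ∈ Ico (0:ℝ) 1)] with t ht
      have hcx := hf_sconv.convexOn.2 (mem_univ z) (mem_univ (z + d))
        (by linarith [ht.1, ht.2] : (0:ℝ) ≤ 1 - t) (le_of_lt ht.1) (by ring : (1 - t) + t = 1)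
      have hptwise : z + t • d = (1 - t) • z + t • (z + d) := by
        rw [smul_add]; module
      rw [slope_def_field]
      have hle : f (z + t • d) ≤ (1 - t) * f z + t * f (z + d) := by
        rw [hptwise]; simpa [smul_eq_mul] using hcx
      have h0d : z + (0:ℝ) • d = z := by simp
      rw [h0d, sub_zero, div_le_iff₀ ht.1]
      nlinarith [hle]
    have hfin : ⟪f' z, d⟫ ≤ f (z + d) - f z := le_of_tendsto hslope hbound
    have hz0 : f (z + d) = f 0 := by simp [hd]
    rw [hz0] at hfin
    have hinner : ⟪f' z, d⟫ = -⟪f' z, z⟫ := by simp [hd]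
    rw [hinner] at hfin
    linarith
  -- properness of f'
  have hpre : ∀ K : Set (EuclideanSpace ℝ (Fin n)), IsCompact K → IsCompact (f' ⁻¹' K) := by
    intro K hK
    obtain ⟨C, hC⟩ : ∃ C, ∀ v ∈ K, ‖v‖ ≤ C := by
      obtain ⟨C, hC⟩ := hK.isBounded.subset_closedBall 0
      exact ⟨C, fun v hv => by simpa [Metric.mem_closedBall, dist_zero_right] using hC hv⟩
    set M : ℝ := |f 0| + max C 0 + 1 with hM
    have hev : {z | M ≤ f z / ‖z‖} ∈ cocompact (EuclideanSpace ℝ (Fin n)) :=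
      hf_coer.eventually (eventually_ge_atTop M)
    obtain ⟨K₀, hK₀c, hK₀⟩ := mem_cocompact.1 hev
    obtain ⟨R₀, hR₀⟩ := hK₀c.isBounded.subset_closedBall 0
    apply (isCompact_closedBall (0 : EuclideanSpace ℝ (Fin n)) (max R₀ 1)).of_isClosed_subset
      (hK.isClosed.preimage hf'cont)
    intro z hz
    rw [Metric.mem_closedBall, dist_zero_right]
    by_contra h
    push_neg at h
    have hz0 : z ∉ Metric.closedBall (0 : EuclideanSpace ℝ (Fin n)) R₀ := by
      simp only [Metric.mem_closedBall, dist_zero_right, not_le]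
      exact lt_of_le_of_lt (le_max_left R₀ 1) h
    have hzK₀ : z ∈ K₀ᶜ := fun hmem => hz0 (hR₀ hmem)
    have h1 : M ≤ f z / ‖z‖ := hK₀ hzK₀
    have hz1 : 1 < ‖z‖ := lt_of_le_of_lt (le_max_right R₀ 1) h
    have h2 : f z ≤ f 0 + ‖f' z‖ * ‖z‖ := by
      have := real_inner_le_norm (f' z) z
      linarith [hgradineq z]
    have h3 : ‖f' z‖ ≤ max C 0 := le_trans (hC _ hz) (le_max_left _ _)
    have h4 : M * ‖z‖ ≤ f z := (le_div_iff₀ (by positivity)).1 h1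
    have h5 : ‖f' z‖ * ‖z‖ ≤ max C 0 * ‖z‖ :=
      mul_le_mul_of_nonneg_right h3 (norm_nonneg z)
    have h6 : f 0 ≤ |f 0| := le_abs_self _
    nlinarith [abs_nonneg (f 0)]
  have hfs'cont : Continuous fs' := by
    have hclosed : IsClosedMap f' :=
      (isProperMap_iff_isCompact_preimage.2 ⟨hf'cont, fun K hK => hpre K hK⟩).isClosedMap
    rw [continuous_iff_isClosed]
    intro C hC
    have himg : fs' ⁻¹' C = f' '' C := by
      ext w
      constructor
      · intro hw; exact ⟨fs' w, hw, hfs'_right w⟩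
      · rintro ⟨c, hc, rfl⟩; rwa [mem_preimage, hfs'_left]
    rw [himg]
    exact hclosed C hC
  -- the integrand is continuous on [0, ∞)
  have hq_eq : ∀ s, q s = ⟪gφs (f' (x s)), f' (x s)⟫ - ⟪gφs (f' (x s)), xstar⟫ := by
    intro s
    simp only [hqdef, key (f' (x s)), EReal.toReal_coe, inner_neg_left]
    ring
  have hc2 : ContinuousOn (fun s => f' (x s)) (Ici 0) := hf'cont.comp_continuousOn hxc
  have hc3 : ContinuousOn (fun s => gφs (f' (x s))) (Ici 0) := hgcont.comp_continuousOn hc2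
  have hqc : ContinuousOn q (Ici 0) :=
    ((hc3.inner hc2).sub (hc3.inner continuousOn_const)).congr fun s _ => hq_eq s
  have hVc : ContinuousOn V (Ici 0) := fun t ht => (main1 t ht).continuousWithinAt
  have hFTC : ∀ T : ℝ, 0 ≤ T → ∫ s in (0:ℝ)..T, q s = V 0 - V T := by
    intro T hT
    have hint : IntervalIntegrable q volume 0 T := by
      rw [intervalIntegrable_iff_integrableOn_Icc_of_le hT]
      exact (hqc.mono Icc_subset_Ici_self).integrableOn_compact isCompact_Icc
    have h := intervalIntegral.integral_eq_sub_of_hasDeriv_right_of_le hT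
      (hVc.mono Icc_subset_Ici_self)
      (fun s hs => (main1 s (le_of_lt hs.1)).mono (fun y hy => le_of_lt (hs.1.trans hy)))
      hint.neg
    rw [intervalIntegral.integral_neg] at h
    linarith
  -- the limit of V along the trajectory
  have hxlim : Tendsto x atTop (𝓝 (fs' xstar)) := by
    have h := (hfs'cont.tendsto xstar).comp hstab
    simpa only [Function.comp_def, hfs'_left] using h
  have hVlim : Tendsto V atTop (𝓝 0) := by
    have h1 : Tendsto (fun T => f (x T)) atTop (𝓝 (f (fs' xstar))) :=
      (hf.continuous.tendsto _).comp hxlim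
    have h3 : Tendsto (fun T => x T - fs' xstar) atTop (𝓝 0) := by
      simpa using hxlim.sub_const (fs' xstar)
    have h2 : Tendsto (fun T => ⟪xstar, x T - fs' xstar⟫) atTop (𝓝 (0:ℝ)) := by
      have h4 : Tendsto (fun T => (⟪xstar, x T - fs' xstar⟫ : ℝ)) atTop
          (𝓝 (⟪xstar, (0 : EuclideanSpace ℝ (Fin n))⟫ : ℝ)) :=
        Filter.Tendsto.inner tendsto_const_nhds h3
      simpa using h4
    have h5 := (h1.sub_const (f (fs' xstar))).sub h2
    simpa using h5
  constructor
  · intro t ht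
    refine ⟨?_, main1 t ht⟩
    rw [key (f' (x t))]
    exact EReal.coe_ne_top _
  · have hmain2 : Tendsto (fun T => V 0 - V T) atTop (𝓝 (V 0 - 0)) :=
      tendsto_const_nhds.sub hVlim
    have heq : (fun T => V 0 - V T) =ᶠ[atTop] fun T => ∫ s in (0:ℝ)..T, q s :=
      (eventually_ge_atTop 0).mono fun T hT => (hFTC T hT).symm
    have hfinal := hmain2.congr' heq
    have hV0 : V 0 - 0 = f x₀ - f (fs' xstar) - ⟪xstar, x₀ - fs' xstar⟫ := by
      simp [hVdef, hx_init]
    rw [← hV0]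
    exact hfinal
end
end

section
/- Suppose φ* is μ-strongly convex relative to f*: D_{φ*}(y, ȳ) ≥ μ D_{f*}(y, ȳ) for all y, ȳ ∈ ℝⁿ, where μ > 0. Then f satisfies the anisotropic gradient dominance condition φ(∇φ*(∇f(x))) ≥ μ (f(x) − f⋆) for all x ∈ ℝⁿ, where f⋆ := inf f. -/
open MeasureTheory Filter Topology Set
open scoped RealInnerProductSpace

noncomputable section

lemma grad_ineq_aux {n : ℕ} {f : EuclideanSpace ℝ (Fin n) → ℝ}
    (hconv : ConvexOn ℝ Set.univ f) {z g : EuclideanSpace ℝ (Fin n)}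
    (hg : HasGradientAt f g z) (w : EuclideanSpace ℝ (Fin n)) :
    f z + ⟪g, w - z⟫ ≤ f w := by
  set c : ℝ → EuclideanSpace ℝ (Fin n) := fun t => z + t • (w - z) with hc
  have hcd : ∀ t : ℝ, HasDerivAt c (w - z) t := by
    intro t
    simpa [hc] using ((hasDerivAt_id t).smul_const (w - z)).const_add z
  have hgconv : ConvexOn ℝ Set.univ (f ∘ c) := by
    refine ⟨convex_univ, fun x _ y _ a b ha hb hab => ?_⟩
    have hlin : c (a • x + b • y) = a • c x + b • c y := by
      obtain rfl : b = 1 - a := by linarith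
      simp only [hc, smul_eq_mul]
      module
    simp only [Function.comp_apply, hlin]
    exact hconv.2 (Set.mem_univ _) (Set.mem_univ _) ha hb hab
  have hc0 : c 0 = z := by simp [hc]
  have hF : HasFDerivAt f (InnerProductSpace.toDual ℝ _ g) (c 0) := by
    rw [hc0]; exact hasGradientAt_iff_hasFDerivAt.mp hg
  have hderiv : HasDerivAt (f ∘ c) ⟪g, w - z⟫ 0 := by
    simpa [InnerProductSpace.toDual_apply_apply] using hF.comp_hasDerivAt 0 (hcd 0)
  have hsl := hgconv.le_slope_of_hasDerivAt (Set.mem_univ (0 : ℝ)) (Set.mem_univ (1 : ℝ))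
    one_pos hderiv
  have hslope : slope (f ∘ c) 0 1 = f w - f z := by
    simp [slope_def_field, hc]
  rw [hslope] at hsl
  linarith


theorem stmt_17 (n : ℕ)
    (f : EuclideanSpace ℝ (Fin n) → ℝ) (f' : EuclideanSpace ℝ (Fin n) → EuclideanSpace ℝ (Fin n))
    (hf : ContDiff ℝ 2 f)
    (hf' : ∀ z, HasGradientAt f (f' z) z)
    (hf_lb : ∀ α : ℝ, Bornology.IsBounded {z | f z ≤ α})
    (hf_sconv : StrictConvexOn ℝ Set.univ f)
    (hf_coer : Tendsto (fun z => f z / ‖z‖) (Filter.cocompact (EuclideanSpace ℝ (Fin n))) atTop)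
    (fs' : EuclideanSpace ℝ (Fin n) → EuclideanSpace ℝ (Fin n))
    (hfs'_left : ∀ z, fs' (f' z) = z)
    (hfs'_right : ∀ y, f' (fs' y) = y)
    (φ : EuclideanSpace ℝ (Fin n) → EReal)
    (hφ_proper : ∃ z, φ z ≠ ⊤)
    (hφ_lsc : LowerSemicontinuous φ)
    (hφ_nonneg : ∀ z, 0 ≤ φ z)
    (hφ_even : ∀ z, φ (-z) = φ z)
    (hφ_zero : φ 0 = 0)
    (hφ_es_dom : (interior {z | φ z ≠ ⊤}).Nonempty)
    (hφ_es_diff : DifferentiableOn ℝ (fun z => (φ z).toReal) (interior {z | φ z ≠ ⊤}))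
    (hφ_es_blow : ∀ w ∈ frontier {z | φ z ≠ ⊤}, ∀ seq : ℕ → EuclideanSpace ℝ (Fin n),
      (∀ k, seq k ∈ interior {z | φ z ≠ ⊤}) → Tendsto seq atTop (𝓝 w) →
      Tendsto (fun k => ‖gradient (fun z => (φ z).toReal) (seq k)‖) atTop atTop)
    (μφ : ℝ) (hμφ : 0 < μφ)
    (hφ_sconv : ∀ z w : EuclideanSpace ℝ (Fin n), ∀ t : ℝ, 0 ≤ t → t ≤ 1 →
      φ (t • z + (1 - t) • w) + ((μφ / 2 * (t * (1 - t)) * ‖z - w‖ ^ 2 : ℝ) : EReal)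
        ≤ (t : EReal) * φ z + ((1 - t : ℝ) : EReal) * φ w)
    (φs : EuclideanSpace ℝ (Fin n) → ℝ)
    (hφs_conj : ∀ y, (φs y : EReal) = ⨆ z, (((⟪z, y⟫ : ℝ) : EReal) - φ z))
    (gφs : EuclideanSpace ℝ (Fin n) → EuclideanSpace ℝ (Fin n))
    (hgφs : ∀ y, HasGradientAt φs (gφs y) y)
    (hg_lip : ∀ y w, ‖gφs y - gφs w‖ ≤ (1 / μφ) * ‖y - w‖)
    (hg_zero : gφs 0 = 0)
    (fs : EuclideanSpace ℝ (Fin n) → ℝ)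
    (hfs_conj : ∀ y, IsLUB (Set.range fun z => ⟪z, y⟫ - f z) (fs y))
    (hfs_grad : ∀ y, HasGradientAt fs (fs' y) y)
    (μ : ℝ) (hμ : 0 < μ)
    (hrel : ∀ y w : EuclideanSpace ℝ (Fin n),
      μ * (fs y - fs w - ⟪fs' w, y - w⟫) ≤ φs y - φs w - ⟪gφs w, y - w⟫)
    :
    ∀ z, ((μ * (f z - ⨅ w, f w) : ℝ) : EReal) ≤ φ (gφs (f' z)) := by
  intro z
  set y := f' z with hy
  -- f is bounded below by -fs 0
  have hub0 := (hfs_conj 0).1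
  have hlb : ∀ w, -(fs 0) ≤ f w := by
    intro w
    have := hub0 (Set.mem_range_self w)
    simp only [inner_zero_right, zero_sub] at this
    linarith
  have hBdd : BddBelow (Set.range f) := ⟨-(fs 0), fun r ⟨w, hw⟩ => hw ▸ hlb w⟩
  have hinf : -(fs 0) ≤ ⨅ w, f w := le_ciInf hlb
  -- Fenchel equality direction: fs y ≤ ⟪z, y⟫ - f z
  have hconv : ConvexOn ℝ Set.univ f := hf_sconv.convexOn
  have hFen : fs y ≤ ⟪z, y⟫ - f z := by
    refine (hfs_conj y).2 ?_
    rintro r ⟨w, rfl⟩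
    have h1 := grad_ineq_aux hconv (hf' z) w
    have h2 : ⟪w, y⟫ - ⟪z, y⟫ = ⟪f' z, w - z⟫ := by
      rw [hy, inner_sub_right, real_inner_comm w, real_inner_comm z]
    simp only
    linarith
  -- apply the relative strong convexity hypothesis at (0, y)
  have hr := hrel 0 y
  rw [hfs'_left z] at hr
  have hiz : ⟪z, 0 - y⟫ = -⟪z, y⟫ := by rw [zero_sub, inner_neg_right]
  have hig : ⟪gφs y, 0 - y⟫ = -⟪gφs y, y⟫ := by rw [zero_sub, inner_neg_right]
  rw [hiz, hig] at hr
  -- φs 0 ≤ 0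
  have hφs0 : φs 0 ≤ 0 := by
    have h := hφs_conj 0
    have hle : (⨆ w, (((⟪w, (0 : EuclideanSpace ℝ (Fin n))⟫ : ℝ) : EReal) - φ w)) ≤ (0 : EReal) := by
      refine iSup_le fun w => ?_
      have : ⟪w, (0 : EuclideanSpace ℝ (Fin n))⟫ = (0 : ℝ) := inner_zero_right w
      rw [this]
      simp only [EReal.coe_zero]
      rw [sub_eq_add_neg, zero_add]
      rw [show (0 : EReal) = -0 by simp]
      exact EReal.neg_le_neg_iff.mpr (hφ_nonneg w)
    rw [← h] at hle
    exact_mod_cast hle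
  -- main case split on whether φ (gφs y) is ⊤
  by_cases htop : φ (gφs y) = ⊤
  · rw [htop]; exact le_top
  · have hne_bot : φ (gφs y) ≠ ⊥ := ne_of_gt (lt_of_lt_of_le (by simp) (hφ_nonneg _))
    set r : ℝ := (φ (gφs y)).toReal with hrdef
    have hcoe : φ (gφs y) = (r : EReal) := (EReal.coe_toReal htop hne_bot).symm
    -- ⟪gφs y, y⟫ - r ≤ φs y
    have hYoung : ⟪gφs y, y⟫ - r ≤ φs y := by
      have h := hφs_conj y
      have hterm : (((⟪gφs y, y⟫ - r : ℝ)) : EReal)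
          ≤ ⨆ w, (((⟪w, y⟫ : ℝ) : EReal) - φ w) := by
        have := le_iSup (fun w => (((⟪w, y⟫ : ℝ) : EReal) - φ w)) (gφs y)
        rw [hcoe] at this
        calc (((⟪gφs y, y⟫ - r : ℝ)) : EReal)
            = ((⟪gφs y, y⟫ : ℝ) : EReal) - (r : EReal) := by rw [EReal.coe_sub]
          _ ≤ _ := this
      rw [← h] at hterm
      exact_mod_cast hterm
    rw [hcoe]
    have hfinal : μ * (f z - ⨅ w, f w) ≤ r := by
      have hstep1 : f z - (⨅ w, f w) ≤ fs 0 - fs y + ⟪z, y⟫ := by linarith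
      have hstep2 : μ * (f z - ⨅ w, f w) ≤ μ * (fs 0 - fs y + ⟪z, y⟫) :=
        mul_le_mul_of_nonneg_left hstep1 hμ.le
      have hstep3 : μ * (fs 0 - fs y + ⟪z, y⟫) ≤ φs 0 - φs y + ⟪gφs y, y⟫ := by
        have : fs 0 - fs y + ⟪z, y⟫ = fs 0 - fs y - (-⟪z, y⟫) := by ring
        rw [this]
        have h2 : φs 0 - φs y + ⟪gφs y, y⟫ = φs 0 - φs y - (-⟪gφs y, y⟫) := by ring
        rw [h2]
        exact hr
      linarith
    exact_mod_cast hfinal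
end
end
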